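/- For any f, g ∈ F₃ and any address α corresponding to a leaf of the reduced domain tree of f, conjugation satisfies f⁻¹ · φ_α(g) · f = φ_{f(α)}(g), where f(α) is the address of the interval f(I_α). -/

import Mathlib

open Set
open scoped Classical

noncomputable section

/-- An address: a finite word in the alphabet `{0,1,2}`. -/
abbrev Address : Type := List (Fin 3)

/-- Left endpoint of the triadic interval `I_α`. -/
def addrLeft : Address → ℝ
  | [] => 0
  | i :: α => ((i : ℕ) : ℝ) / 3 + addrLeft α / 3

/-- Length of the triadic interval `I_α`. -/
def addrLen (α : Address) : ℝ := (1 / 3 : ℝ) ^ α.length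

/-- The triadic subinterval `I_α ⊆ [0,1]` determined by the address `α`. -/
def Iaddr (α : Address) : Set ℝ := Set.Icc (addrLeft α) (addrLeft α + addrLen α)

/-- The linear orientation-preserving isomorphism `ψ_α : I_α → [0,1]`. -/
def psi (α : Address) (t : ℝ) : ℝ := (t - addrLeft α) / addrLen α

/-- The inverse `ψ_α⁻¹ : [0,1] → I_α`. -/
def psiInv (α : Address) (t : ℝ) : ℝ := addrLeft α + addrLen α * t

/-- `φ_α(f)` acts as `ψ_α⁻¹ ∘ f ∘ ψ_α` on `I_α` and as the identity elsewhere. -/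
def phi (α : Address) (f : ℝ → ℝ) : ℝ → ℝ :=
  fun t => if t ∈ Iaddr α then psiInv α (f (psi α t)) else t

/-- A triadic rational. -/
def IsTriadic (q : ℝ) : Prop := ∃ a : ℤ, ∃ n : ℕ, q = (a : ℝ) / 3 ^ n

/-- Membership in the Brown–Thompson group `F₃`, realized as piecewise-linear
homeomorphisms of `[0,1]` (extended by the identity to all of `ℝ`) with breakpoints
at triadic rationals and slopes powers of `3`. The group product is `f·g = g ∘ f`. -/
def IsF3 (f : ℝ → ℝ) : Prop :=
  (∀ t, t ∉ Set.Icc (0 : ℝ) 1 → f t = t) ∧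
  Set.BijOn f (Set.Icc 0 1) (Set.Icc 0 1) ∧
  StrictMonoOn f (Set.Icc 0 1) ∧
  ∃ breaks : Finset ℝ, (∀ b ∈ breaks, IsTriadic b) ∧
    ∀ x ∈ Set.Icc (0 : ℝ) 1, x ∉ breaks →
      ∃ (k : ℤ) (c : ℝ), IsTriadic c ∧
        ∀ᶠ y in nhdsWithin x (Set.Icc 0 1), f y = (3 : ℝ) ^ k * y + c

/-- `f` maps `I_α` linearly (preserving orientation, with triadic affine data)
onto the triadic interval `I_β`. -/
def IsTriadicLinearOn (f : ℝ → ℝ) (α β : Address) : Prop :=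
  ∀ t ∈ Iaddr α, f t = psiInv β (psi α t)

/-- The depth of the maximal all-`i` leaf of the reduced domain tree of `f`:
the least `n` such that `f` maps `I_{iⁿ}` linearly onto a triadic interval. -/
def leafExp (i : Fin 3) (f : ℝ → ℝ) : ℕ :=
  sInf {n : ℕ | ∃ β : Address, IsTriadicLinearOn f (List.replicate n i) β}

/-- The address `l(f) = 1ⁿ` of the central leaf of `f` (the leaf of the reduced
domain tree whose interval contains `1/2`). -/
def centralLeaf (f : ℝ → ℝ) : Address := List.replicate (leafExp 1 f) 1

/-- The central monoid operation `f ⋄ g = φ_{l(f)}(g) · f` (recall `a·b = b ∘ a`). -/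
def diam (f g : ℝ → ℝ) : ℝ → ℝ := fun t => f (phi (centralLeaf f) g t)

/-!
On `I_α` the map `f` is `ψ_β⁻¹ ∘ ψ_α`, so conjugating `ψ_α⁻¹ ∘ g ∘ ψ_α` by `f` gives
`ψ_β⁻¹ ∘ g ∘ ψ_β` on `I_β`. Off `I_β` both sides are the identity, because `f` maps `I_α`
into `I_β`, so `f⁻¹` sends the complement of `I_β` into the complement of `I_α`.
-/

lemma addrLen_pos (α : Address) : 0 < addrLen α := by
  unfold addrLen; positivity

lemma psi_psiInv (α : Address) (x : ℝ) : psi α (psiInv α x) = x := by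
  have := (addrLen_pos α).ne'
  unfold psi psiInv
  field_simp
  ring

lemma psiInv_psi (α : Address) (t : ℝ) : psiInv α (psi α t) = t := by
  have := (addrLen_pos α).ne'
  unfold psi psiInv
  field_simp
  ring

lemma psiInv_mem (α : Address) {x : ℝ} (hx : x ∈ Icc (0 : ℝ) 1) : psiInv α x ∈ Iaddr α := by
  have hL := addrLen_pos α
  exact ⟨le_add_of_nonneg_right (mul_nonneg hL.le hx.1),
    add_le_add_right (mul_le_of_le_one_right hL.le hx.2) _⟩

lemma psi_mem (α : Address) {t : ℝ} (ht : t ∈ Iaddr α) : psi α t ∈ Icc (0 : ℝ) 1 := by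
  have hL := addrLen_pos α
  exact ⟨div_nonneg (by linarith [ht.1]) hL.le, (div_le_one hL).2 (by linarith [ht.2])⟩

lemma phi_of_mem {α : Address} {t : ℝ} (g : ℝ → ℝ) (ht : t ∈ Iaddr α) :
    phi α g t = psiInv α (g (psi α t)) :=
  if_pos ht

lemma phi_of_notMem {α : Address} {t : ℝ} (g : ℝ → ℝ) (ht : t ∉ Iaddr α) : phi α g t = t :=
  if_neg ht

namespace IsTriadicLinearOn

variable {f : ℝ → ℝ} {α β : Address}

lemma apply_psiInv (h : IsTriadicLinearOn f α β) {x : ℝ} (hx : x ∈ Icc (0 : ℝ) 1) :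
    f (psiInv α x) = psiInv β x := by
  rw [h _ (psiInv_mem α hx), psi_psiInv]

lemma mapsTo (h : IsTriadicLinearOn f α β) : MapsTo f (Iaddr α) (Iaddr β) := fun t ht => by
  rw [h t ht]
  exact psiInv_mem β (psi_mem α ht)

end IsTriadicLinearOn

theorem phi_conj_general (f finv g : ℝ → ℝ) (α β : Address)
    (hg : IsF3 g)
    (hinv₁ : Function.LeftInverse finv f) (hinv₂ : Function.RightInverse finv f)
    (hleaf : IsTriadicLinearOn f α β) :
    (fun t => f (phi α g (finv t))) = phi β g := by
  funext t
  by_cases ht : t ∈ Iaddr β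
  · have hx := psi_mem β ht
    have hfinv : finv t = psiInv α (psi β t) := by
      rw [← hinv₁ (psiInv α (psi β t)), hleaf.apply_psiInv hx, psiInv_psi]
    rw [hfinv, phi_of_mem g (psiInv_mem α hx), psi_psiInv,
      hleaf.apply_psiInv (hg.2.1.mapsTo hx), phi_of_mem g ht]
  · have hfinv : finv t ∉ Iaddr α := fun h => ht (hinv₂ t ▸ hleaf.mapsTo h)
    rw [phi_of_notMem g hfinv, hinv₂ t, phi_of_notMem g ht]

/-- for `α` a leaf address of `f`, mapped linearly onto `I_β` (so that
`β = f(α)`), conjugation satisfies `f⁻¹ · φ_α(g) · f = φ_{f(α)}(g)`, i.e.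
`f ∘ φ_α(g) ∘ f⁻¹ = φ_β(g)` (the group product is `a·b = b∘a`). -/
theorem phi_conj (f finv g : ℝ → ℝ) (α β : Address)
    (hf : IsF3 f) (hg : IsF3 g)
    (hinv₁ : Function.LeftInverse finv f) (hinv₂ : Function.RightInverse finv f)
    (hleaf : IsTriadicLinearOn f α β) :
    (fun t => f (phi α g (finv t))) = phi β g :=
  phi_conj_general f finv g α β hg hinv₁ hinv₂ hleaf
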